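/- Let u ∈ ℝ be fixed, σ > 0, α ∈ (0,2). For d > 0 set a = σ d^{α/2}, z₁ = 1, z₂ = e^{a u}, and let f_d(z₁,z₂; σ) = ∂²/∂z₁∂z₂ exp(−V_d(z₁,z₂;σ)) be the bivariate Brown-Resnick density where V_d(z₁,z₂;σ) = (1/z₁)Φ(a/2 + u) + (1/z₂)Φ(a/2 − u). Then lim_{d→0} ∂/∂σ log f_d(z₁,z₂;σ) = (u² − 1)/σ. -/

import Mathlib

open Real Set Filter

/-- The standard Gaussian cumulative distribution function. -/
noncomputable def Phi (x : ℝ) : ℝ :=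
  ∫ t in Set.Iic x, Real.exp (-t ^ 2 / 2) / Real.sqrt (2 * Real.pi)

/-- The bivariate Brown-Resnick exponent function with `a = σ d^{α/2}`. -/
noncomputable def Vpair (a z₁ z₂ : ℝ) : ℝ :=
  (1 / z₁) * Phi (a / 2 + Real.log (z₂ / z₁) / a)
    + (1 / z₂) * Phi (a / 2 - Real.log (z₂ / z₁) / a)

/-- The bivariate Brown-Resnick density `f = ∂²/∂z₁∂z₂ exp (-V)`. -/
noncomputable def fpair (a z₁ z₂ : ℝ) : ℝ :=
  deriv (fun t₁ => deriv (fun t₂ => Real.exp (-(Vpair a t₁ t₂))) z₂) z₁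

/-!
The partial derivatives of `Vpair` in `z₁`, `z₂` and `a` all simplify through the Gaussian
identity `φ (a/2 + r/a) * exp r = φ (a/2 - r/a)`. This gives `fpair` in closed form, and
`log (fpair a 1 (exp c)) = -Vpair a 1 (exp c) - 2c + log (Φ(w₊) Φ(w₋) + φ(w₋)/a)` with
`w± = a/2 ± c/a`. Since `a = σ h` with `h = d^{α/2}`, the `σ`-score is `(a ∂ₐ log f)/σ`; at
`c = a u` this extends continuously to `a = 0`, where only `log (φ(w₋)/a)` contributes, and
`a ∂ₐ log (φ(w₋)/a) = -w₋ (a/2 + u) - 1 → u² - 1`.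
-/
open MeasureTheory ProbabilityTheory Topology

local notation "φ" => gaussianPDFReal 0 1

lemma stdGaussianPDF_apply (x : ℝ) : φ x = exp (-x ^ 2 / 2) / √(2 * π) := by
  simp [gaussianPDFReal, div_eq_inv_mul]

lemma stdGaussianPDF_pos (x : ℝ) : 0 < φ x := gaussianPDFReal_pos 0 1 x one_ne_zero

lemma hasDerivAt_stdGaussianPDF (x : ℝ) : HasDerivAt φ (-x * φ x) x := by
  have h : HasDerivAt (fun t => -t ^ 2 / 2) (-x) x :=
    ((hasDerivAt_pow 2 x).fun_neg.div_const 2).congr_deriv (by ring)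
  rw [funext stdGaussianPDF_apply, ← mul_div_assoc, mul_comm (-x)]
  exact h.exp.div_const _

lemma continuous_stdGaussianPDF : Continuous φ :=
  continuous_iff_continuousAt.2 fun x => (hasDerivAt_stdGaussianPDF x).continuousAt

/-- Completing the square: `-(a/2 + r/a)²/2 + r = -(a/2 - r/a)²/2`. -/
lemma stdGaussianPDF_mul_exp {a : ℝ} (ha : a ≠ 0) (r : ℝ) :
    φ (a / 2 + r / a) * exp r = φ (a / 2 - r / a) := by
  rw [stdGaussianPDF_apply, stdGaussianPDF_apply, div_mul_eq_mul_div, ← exp_add]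
  congr 2
  field_simp
  ring

lemma Phi_eq_integral (x : ℝ) : Phi x = ∫ t in Iic x, φ t := by
  simp only [Phi, stdGaussianPDF_apply]

lemma hasDerivAt_Phi (x : ℝ) : HasDerivAt Phi (φ x) x := by
  have hint : Integrable φ := integrable_gaussianPDFReal 0 1
  have h := (intervalIntegral.integral_hasDerivAt_right (hint.intervalIntegrable (a := 0) (b := x))
    (continuous_stdGaussianPDF.stronglyMeasurableAtFilter _ _)
    continuous_stdGaussianPDF.continuousAt).const_add (Phi 0)
  refine h.congr_of_eventuallyEq (.of_forall fun y => ?_)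
  show Phi y = Phi 0 + ∫ t in (0 : ℝ)..y, φ t
  rw [Phi_eq_integral, Phi_eq_integral,
    ← intervalIntegral.integral_Iic_sub_Iic hint.integrableOn hint.integrableOn]
  ring

lemma continuous_Phi : Continuous Phi :=
  continuous_iff_continuousAt.2 fun x => (hasDerivAt_Phi x).continuousAt

lemma Phi_pos (x : ℝ) : 0 < Phi x := by
  rw [Phi_eq_integral, setIntegral_pos_iff_support_of_nonneg_ae
    (.of_forall fun t => (stdGaussianPDF_pos t).le) (integrable_gaussianPDFReal 0 1).integrableOn]
  simp [Function.support_eq_univ fun t => (stdGaussianPDF_pos t).ne']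

lemma Vpair_comm (a z₁ z₂ : ℝ) : Vpair a z₁ z₂ = Vpair a z₂ z₁ := by
  have hlog : log (z₁ / z₂) = -log (z₂ / z₁) := by rw [← log_inv, inv_div]
  rw [Vpair, Vpair, hlog, neg_div, sub_neg_eq_add, ← sub_eq_add_neg, add_comm]

lemma inv_mul_stdGaussianPDF_symm {a z₁ z₂ : ℝ} (ha : a ≠ 0) (h₁ : 0 < z₁)
    (h₂ : 0 < z₂) :
    z₁⁻¹ * φ (a / 2 + log (z₂ / z₁) / a) =
      z₂⁻¹ * φ (a / 2 - log (z₂ / z₁) / a) := by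
  rw [← stdGaussianPDF_mul_exp ha, exp_log (div_pos h₂ h₁)]
  field_simp

/-- The two Gaussian density terms cancel by `inv_mul_stdGaussianPDF_symm`. -/
lemma hasDerivAt_Vpair_snd {a z₁ z₂ : ℝ} (ha : a ≠ 0) (h₁ : 0 < z₁) (h₂ : 0 < z₂) :
    HasDerivAt (Vpair a z₁) (-(z₂ ^ 2)⁻¹ * Phi (a / 2 - log (z₂ / z₁) / a)) z₂ := by
  have hr : HasDerivAt (fun t => log (t / z₁) / a) (1 / z₁ / (z₂ / z₁) / a) z₂ :=
    (((hasDerivAt_id' z₂).div_const z₁).log (div_pos h₂ h₁).ne').div_const a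
  have hinv : HasDerivAt (fun t : ℝ => 1 / t) (-(z₂ ^ 2)⁻¹) z₂ := by
    simpa only [one_div] using hasDerivAt_inv h₂.ne'
  have h :=
    (((hasDerivAt_Phi _).comp z₂ (hr.const_add (a / 2))).const_mul (1 / z₁)).add
    (hinv.mul ((hasDerivAt_Phi _).comp z₂ (hr.const_sub (a / 2))))
  refine h.congr_deriv ?_
  simp only [Function.comp_apply]
  linear_combination (1 / z₁ / (z₂ / z₁) / a) * inv_mul_stdGaussianPDF_symm ha h₁ h₂

/-- The two Gaussian density terms merge by `inv_mul_stdGaussianPDF_symm`. -/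
lemma hasDerivAt_Vpair_param {a z₁ z₂ : ℝ} (ha : a ≠ 0) (h₁ : 0 < z₁) (h₂ : 0 < z₂) :
    HasDerivAt (fun b => Vpair b z₁ z₂) (z₁⁻¹ * φ (a / 2 + log (z₂ / z₁) / a)) a := by
  have key := inv_mul_stdGaussianPDF_symm ha h₁ h₂
  set r := log (z₂ / z₁)
  have hw : HasDerivAt (fun b => b / 2 + r / b) (1 / 2 + (0 * a - r * 1) / a ^ 2) a :=
    ((hasDerivAt_id' a).div_const 2).add ((hasDerivAt_const a r).div (hasDerivAt_id' a) ha)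
  have hw' : HasDerivAt (fun b => b / 2 - r / b) (1 / 2 - (0 * a - r * 1) / a ^ 2) a :=
    ((hasDerivAt_id' a).div_const 2).sub ((hasDerivAt_const a r).div (hasDerivAt_id' a) ha)
  have h := (((hasDerivAt_Phi _).comp a hw).const_mul (1 / z₁)).add
    (((hasDerivAt_Phi _).comp a hw').const_mul (1 / z₂))
  refine h.congr_deriv ?_
  linear_combination -(1 / 2 + r / a ^ 2) * key

lemma fpair_eq {a z₁ z₂ : ℝ} (ha : a ≠ 0) (h₁ : 0 < z₁) (h₂ : 0 < z₂) :
    fpair a z₁ z₂ = exp (-Vpair a z₁ z₂) / (z₁ * z₂) ^ 2 *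
      (Phi (a / 2 + log (z₂ / z₁) / a) * Phi (a / 2 - log (z₂ / z₁) / a)
        + z₁ * φ (a / 2 - log (z₂ / z₁) / a) / a) := by
  have hinner : (fun t₁ => deriv (fun t₂ => exp (-Vpair a t₁ t₂)) z₂) =ᶠ[𝓝 z₁]
      fun t₁ =>
        exp (-Vpair a t₁ z₂) * (-(-(z₂ ^ 2)⁻¹ * Phi (a / 2 - log (z₂ / t₁) / a))) := by
    filter_upwards [eventually_gt_nhds h₁] with t₁ ht₁
    exact ((hasDerivAt_Vpair_snd ha ht₁ h₂).fun_neg.exp).deriv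
  have hfst : HasDerivAt (fun t₁ => Vpair a t₁ z₂)
      (-(z₁ ^ 2)⁻¹ * Phi (a / 2 + log (z₂ / z₁) / a)) z₁ := by
    have h := hasDerivAt_Vpair_snd ha h₂ h₁
    rwa [← inv_div z₂, log_inv, neg_div, sub_neg_eq_add, ← funext (Vpair_comm a · z₂)] at h
  have hlog : HasDerivAt (fun t₁ => log (z₂ / t₁))
      ((0 * z₁ - z₂ * 1) / z₁ ^ 2 / (z₂ / z₁)) z₁ :=
    ((hasDerivAt_const z₁ z₂).div (hasDerivAt_id' z₁) h₁.ne').log (div_pos h₂ h₁).ne'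
  have hΦ := (hasDerivAt_Phi _).comp z₁ ((hlog.div_const a).const_sub (a / 2))
  have h := hfst.fun_neg.exp.mul (hΦ.const_mul (-(z₂ ^ 2)⁻¹)).fun_neg
  rw [fpair, hinner.deriv_eq]
  refine h.deriv.trans ?_
  simp only [Function.comp_apply]
  field_simp
  ring

/-- `fpair a 1 (exp c) = exp (-Vpair a 1 (exp c) - 2 c) * pairFactor c a`, see `fpair_eq`. -/
noncomputable def pairFactor (c a : ℝ) : ℝ :=
  Phi (a / 2 + c / a) * Phi (a / 2 - c / a) + φ (a / 2 - c / a) / a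

lemma pairFactor_pos (c : ℝ) {a : ℝ} (ha : 0 < a) : 0 < pairFactor c a :=
  add_pos (mul_pos (Phi_pos _) (Phi_pos _)) (div_pos (stdGaussianPDF_pos _) ha)

lemma log_fpair_one_exp (c : ℝ) {a : ℝ} (ha : 0 < a) :
    log (fpair a 1 (exp c)) = -Vpair a 1 (exp c) - 2 * c + log (pairFactor c a) := by
  rw [fpair_eq ha.ne' one_pos (exp_pos c), div_one, log_exp, one_mul, one_mul, ← pairFactor,
    log_mul (by positivity) (pairFactor_pos c ha).ne', log_div (exp_ne_zero _) (by positivity),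
    log_exp, log_pow, log_exp]
  push_cast
  ring

lemma hasDerivAt_pairFactor (c : ℝ) {a : ℝ} (ha : a ≠ 0) :
    HasDerivAt (pairFactor c)
      (φ (a / 2 + c / a) * (1 / 2 - c / a ^ 2) * Phi (a / 2 - c / a)
        + Phi (a / 2 + c / a) * (φ (a / 2 - c / a) * (1 / 2 + c / a ^ 2))
        - ((a / 2 - c / a) * (1 / 2 + c / a ^ 2) * a + 1) * φ (a / 2 - c / a) / a ^ 2) a := by
  have hw : HasDerivAt (fun b => b / 2 + c / b) (1 / 2 + (0 * a - c * 1) / a ^ 2) a :=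
    ((hasDerivAt_id' a).div_const 2).add ((hasDerivAt_const a c).div (hasDerivAt_id' a) ha)
  have hw' : HasDerivAt (fun b => b / 2 - c / b) (1 / 2 - (0 * a - c * 1) / a ^ 2) a :=
    ((hasDerivAt_id' a).div_const 2).sub ((hasDerivAt_const a c).div (hasDerivAt_id' a) ha)
  have h := (((hasDerivAt_Phi _).comp a hw).mul ((hasDerivAt_Phi _).comp a hw')).add
    (((hasDerivAt_stdGaussianPDF _).comp a hw').div (hasDerivAt_id' a) ha)
  refine h.congr_deriv ?_
  simp only [Function.comp_apply]
  field_simp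
  ring

lemma hasDerivAt_log_fpair_one_exp (c : ℝ) {a : ℝ} (ha : 0 < a) :
    HasDerivAt (fun b => log (fpair b 1 (exp c)))
      (-φ (a / 2 + c / a) + deriv (pairFactor c) a / pairFactor c a) a := by
  have hV := hasDerivAt_Vpair_param ha.ne' one_pos (exp_pos c)
  rw [div_one, log_exp, inv_one, one_mul] at hV
  have h := ((hV.fun_neg.sub_const (2 * c)).add
    ((hasDerivAt_pairFactor c ha.ne').differentiableAt.hasDerivAt.log (pairFactor_pos c ha).ne'))
  refine h.congr_of_eventuallyEq ?_
  filter_upwards [eventually_gt_nhds ha] with b hb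
  exact log_fpair_one_exp c hb

/-- `a ∂ₐ log fpair a 1 (exp c)` at `c = a u`, in a form that is visibly continuous at `a = 0`. -/
noncomputable def normalizedScore (u a : ℝ) : ℝ :=
  -a * φ (a / 2 + u)
    + (a * (φ (a / 2 + u) * (a / 2 - u) * Phi (a / 2 - u)
          + Phi (a / 2 + u) * φ (a / 2 - u) * (a / 2 + u))
        + (u ^ 2 - 1 - (a / 2) ^ 2) * φ (a / 2 - u))
      / (a * Phi (a / 2 + u) * Phi (a / 2 - u) + φ (a / 2 - u))

lemma deriv_log_fpair_scale (u : ℝ) {σ h : ℝ} (hσ : 0 < σ) (hh : 0 < h) :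
    deriv (fun s => log (fpair (s * h) 1 (exp (σ * h * u)))) σ =
      normalizedScore u (σ * h) / σ := by
  have ha : 0 < σ * h := mul_pos hσ hh
  have hF := (hasDerivAt_log_fpair_one_exp (σ * h * u) ha).comp σ
    ((hasDerivAt_id' σ).mul_const h)
  refine hF.deriv.trans ?_
  have hB := pairFactor_pos (σ * h * u) ha
  have hden :
      0 < σ * h * Phi (σ * h / 2 + u) * Phi (σ * h / 2 - u) + φ (σ * h / 2 - u) := by
    have := Phi_pos (σ * h / 2 + u); have := Phi_pos (σ * h / 2 - u)
    have := stdGaussianPDF_pos (σ * h / 2 - u)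
    positivity
  have hu : σ * h * u / (σ * h) = u := by field_simp
  rw [(hasDerivAt_pairFactor _ ha.ne').deriv]
  unfold pairFactor at hB ⊢
  unfold normalizedScore
  rw [hu] at hB ⊢
  field_simp
  ring

lemma continuousAt_normalizedScore (u : ℝ) : ContinuousAt (normalizedScore u) 0 := by
  have hΦ := continuous_Phi
  have hφ := continuous_stdGaussianPDF
  have hden : (0 : ℝ) * Phi (0 / 2 + u) * Phi (0 / 2 - u) + φ (0 / 2 - u) ≠ 0 := by
    simpa using (stdGaussianPDF_pos (-u)).ne'
  exact (by fun_prop : Continuous fun a => -a * φ (a / 2 + u)).continuousAt.add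
    ((by fun_prop : Continuous _).continuousAt.div (by fun_prop : Continuous _).continuousAt hden)

lemma normalizedScore_zero (u : ℝ) : normalizedScore u 0 = u ^ 2 - 1 := by
  have := (stdGaussianPDF_pos (-u)).ne'
  simp only [normalizedScore, neg_zero, zero_mul, zero_add, zero_div, zero_sub]
  field_simp
  ring

/-- with `z₁ = 1`, `z₂ = e^{σ d^{α/2} u}` held so that the normalized
increment equals `u`, the pairwise score in `σ` satisfies
`∂/∂σ log f_d(z₁,z₂;σ) → (u² - 1)/σ` as `d → 0⁺`. -/
theorem pairwise_score_sigma_limit (u σ α : ℝ) (hσ : 0 < σ) (hα : α ∈ Set.Ioo (0:ℝ) 2) :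
    Filter.Tendsto
      (fun d : ℝ =>
        deriv (fun s : ℝ =>
          Real.log (fpair (s * d ^ (α / 2)) 1 (Real.exp (σ * d ^ (α / 2) * u)))) σ)
      (nhdsWithin 0 (Set.Ioi 0)) (nhds ((u ^ 2 - 1) / σ)) := by
  have hpow : Tendsto (fun d : ℝ => σ * d ^ (α / 2)) (𝓝[>] 0) (𝓝 0) := by
    have h := (continuousAt_rpow_const 0 (α / 2) (.inr (by linarith [hα.1]))).tendsto.const_mul σ
    rw [zero_rpow (by linarith [hα.1]), mul_zero] at h
    exact h.mono_left nhdsWithin_le_nhds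
  have hlim := ((continuousAt_normalizedScore u).tendsto.comp hpow).div_const σ
  rw [normalizedScore_zero] at hlim
  refine hlim.congr' ?_
  filter_upwards [self_mem_nhdsWithin] with d hd
  exact (deriv_log_fpair_scale u hσ (rpow_pos_of_pos hd _)).symm
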